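/- The divergent ∞pede strategy profile d_0, in which agent A pushes at the root, is not rational: ¬Rat_∞(d_0), where d_n = ⟨A, 2, ⟨A↦2^(2n+2), B↦2^(2n)⟩, π_n⟩ and π_n = ⟨B, 1, ⟨A↦2^(2n+1), B↦2^(2n+3)⟩, p_{n+1}⟩. -/

import Mathlib

/-!
Backward induction along the ∞pede. By induction on convergence, every subgame perfect
equilibrium of the game of `p_n` (resp. `π_n`) ends at the leaf where the mover takes at once:
pushing instead would lead to the opponent taking at the next position, which gives the mover
half as much. Since an SPE is always convergent, the right subgame of any SPE with the game of
`d_0` thus ends at `⟨A ↦ 2, B ↦ 8⟩`, so Alice, who pushes at the root, gets 2 instead of the 4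
she gets by taking, and the root is not even a Nash equilibrium.
-/

noncomputable section

/-- The two agents. -/
inductive Ag : Type
  | A
  | B
deriving DecidableEq

/-- The set of choices `{1, 2}`. -/
inductive Choice : Type
  | one
  | two
deriving DecidableEq

/-- The polynomial functor whose final coalgebra is the set of finite or
infinite strategy profiles: a node is either an ending position carrying a
utility assignment (no children) or an internal position carrying an agent
and a choice (two children, indexed by `Bool`). -/
def SPF (Agent : Type) : PFunctor.{0} :=
  ⟨(Agent → ℝ) ⊕ (Agent × Choice), fun x => Sum.rec (fun _ => Empty) (fun _ => Bool) x⟩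

/-- Finite or infinite strategy profiles, as the M-type (final coalgebra). -/
def StratProf (Agent : Type) : Type :=
  (SPF Agent).M

/-- The ending position `⟨u⟩`. -/
def leafP {Agent : Type} (u : Agent → ℝ) : StratProf Agent :=
  PFunctor.M.mk ⟨Sum.inl u, fun e => Empty.elim e⟩

/-- The strategy profile `⟨a, c, s₁, s₂⟩`. -/
def nodeP {Agent : Type} (a : Agent) (c : Choice) (s₁ s₂ : StratProf Agent) :
    StratProf Agent :=
  PFunctor.M.mk ⟨Sum.inr (a, c), fun b => bif b then s₂ else s₁⟩

/-- The child selected by choice `c`. -/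
def cchild {Agent : Type} (c : Choice) (s₁ s₂ : StratProf Agent) : StratProf Agent :=
  match c with
  | .one => s₁
  | .two => s₂

/-- `conv s`: following the choices of `s` reaches an ending position after
finitely many steps (inductive definition). -/
inductive Conv {Agent : Type} : StratProf Agent → Prop
  | leaf (u : Agent → ℝ) : Conv (leafP u)
  | node1 (a : Agent) (s₁ s₂ : StratProf Agent) :
      Conv s₁ → Conv (nodeP a Choice.one s₁ s₂)
  | node2 (a : Agent) (s₁ s₂ : StratProf Agent) :
      Conv s₂ → Conv (nodeP a Choice.two s₁ s₂)

/-- The graph of the (partial) utility assignment `ŝ`: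
`UtilR s u` holds iff following the choices of `s` reaches the ending
position `⟨u⟩`. -/
inductive UtilR {Agent : Type} : StratProf Agent → (Agent → ℝ) → Prop
  | leaf (u : Agent → ℝ) : UtilR (leafP u) u
  | node1 (a : Agent) (s₁ s₂ : StratProf Agent) (u : Agent → ℝ) :
      UtilR s₁ u → UtilR (nodeP a Choice.one s₁ s₂) u
  | node2 (a : Agent) (s₁ s₂ : StratProf Agent) (u : Agent → ℝ) :
      UtilR s₂ u → UtilR (nodeP a Choice.two s₁ s₂) u

open Classical in
/-- The utility assignment `ŝ` (an arbitrary default on non-convergent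
profiles). -/
def util {Agent : Type} (s : StratProf Agent) : Agent → ℝ :=
  if h : ∃ u, UtilR s u then h.choose else fun _ => 0

/-- `□P`, the coinductive `always` modality: `P` holds at every position of
the strategy profile (greatest fixed point). -/
def Always {Agent : Type} (P : StratProf Agent → Prop) (s : StratProf Agent) : Prop :=
  ∃ R : StratProf Agent → Prop, R s ∧ ∀ t, R t →
    P t ∧ ∀ a c s₁ s₂, t = nodeP a c s₁ s₂ → R s₁ ∧ R s₂

/-- `PE s`: `s` is always-convergent and the choice at the root of `s` is at
least as good, for the agent who owns the root, as the other choice. -/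
def PE {Agent : Type} (s : StratProf Agent) : Prop :=
  Always Conv s ∧
    (∀ a s₁ s₂, s = nodeP a Choice.one s₁ s₂ → util s₁ a ≥ util s₂ a) ∧
    (∀ a s₁ s₂, s = nodeP a Choice.two s₁ s₂ → util s₂ a ≥ util s₁ a)

/-- Subgame perfect equilibrium: `□PE`. -/
def SPE {Agent : Type} : StratProf Agent → Prop :=
  Always PE

/-- `s =_g s'`: the two strategy profiles have the same underlying game
(coinductive definition). -/
def SameGame {Agent : Type} (s s' : StratProf Agent) : Prop :=
  ∃ R : StratProf Agent → StratProf Agent → Prop, R s s' ∧ ∀ t t', R t t' →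
    (∃ u, t = leafP u ∧ t' = leafP u) ∨
    (∃ a c c' s₁ s₂ s₁' s₂',
      t = nodeP a c s₁ s₂ ∧ t' = nodeP a c' s₁' s₂' ∧ R s₁ s₁' ∧ R s₂ s₂')

/-- `Rat_∞`: rationality for finite or infinite strategy profiles
(coinductive definition). -/
def RatInf {Agent : Type} (s : StratProf Agent) : Prop :=
  ∃ R : StratProf Agent → Prop, R s ∧ ∀ t, R t →
    (∃ u, t = leafP u) ∨
    (∃ a c s₁ s₂ s₁' s₂', t = nodeP a c s₁ s₂ ∧
      SameGame (nodeP a c s₁' s₂') (nodeP a c s₁ s₂) ∧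
      SPE (nodeP a c s₁' s₂') ∧ R (cchild c s₁ s₂))

/-- `diverg`: following the choices never reaches an ending position
(coinductive definition). -/
def Diverg {Agent : Type} (s : StratProf Agent) : Prop :=
  ∃ R : StratProf Agent → Prop, R s ∧ ∀ t, R t →
    ∃ a c s₁ s₂, t = nodeP a c s₁ s₂ ∧ R (cchild c s₁ s₂)

/-- Utilities of the leaf reached when Alice takes at her `n`-th position of
the ∞pede: `A ↦ 2^(2n+2)`, `B ↦ 2^(2n)`. -/
def uAp (n : ℕ) : Ag → ℝ := fun x =>
  match x with
  | Ag.A => (2 : ℝ) ^ (2 * n + 2)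
  | Ag.B => (2 : ℝ) ^ (2 * n)

/-- Utilities of the leaf reached when Bob takes at his `n`-th position of
the ∞pede: `A ↦ 2^(2n+1)`, `B ↦ 2^(2n+3)`. -/
def uBp (n : ℕ) : Ag → ℝ := fun x =>
  match x with
  | Ag.A => (2 : ℝ) ^ (2 * n + 1)
  | Ag.B => (2 : ℝ) ^ (2 * n + 3)

/-- States for the mutual corecursion defining the `always take` profiles
`p_n` and `π_n` of the ∞pede. -/
inductive PedSt : Type
  | pS (n : ℕ)
  | piS (n : ℕ)
  | lS (u : Ag → ℝ)

/-- One step of the corecursion: `p_n = ⟨A, 1, ⟨A↦2^(2n+2), B↦2^(2n)⟩, π_n⟩`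
and `π_n = ⟨B, 1, ⟨A↦2^(2n+1), B↦2^(2n+3)⟩, p_{n+1}⟩`. -/
def pedStep : PedSt → (SPF Ag).Obj PedSt
  | PedSt.lS u => ⟨Sum.inl u, fun e => Empty.elim e⟩
  | PedSt.pS n =>
      ⟨Sum.inr (Ag.A, Choice.one), fun b => bif b then PedSt.piS n else PedSt.lS (uAp n)⟩
  | PedSt.piS n =>
      ⟨Sum.inr (Ag.B, Choice.one), fun b => bif b then PedSt.pS (n + 1) else PedSt.lS (uBp n)⟩

/-- The ∞pede profile `p_n` where both agents always take. -/
def pped (n : ℕ) : StratProf Ag :=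
  PFunctor.M.corec pedStep (PedSt.pS n)

/-- The ∞pede profile `π_n` where both agents always take. -/
def piped (n : ℕ) : StratProf Ag :=
  PFunctor.M.corec pedStep (PedSt.piS n)

/-- The divergent ∞pede profile `d_n = ⟨A, 2, ⟨A↦2^(2n+2), B↦2^(2n)⟩, π_n⟩`,
in which Alice pushes at the root. -/
def dped (n : ℕ) : StratProf Ag :=
  nodeP Ag.A Choice.two (leafP (uAp n)) (piped n)

section Profiles

variable {Agent : Type}

theorem nodeP_inj {a a' : Agent} {c c' : Choice} {s₁ s₂ s₁' s₂' : StratProf Agent}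
    (h : nodeP a c s₁ s₂ = nodeP a' c' s₁' s₂') :
    a = a' ∧ c = c' ∧ s₁ = s₁' ∧ s₂ = s₂' := by
  obtain ⟨hac, hs⟩ := Sigma.mk.inj (PFunctor.M.mk_inj h)
  obtain ⟨rfl, rfl⟩ := Prod.mk.inj (Sum.inr.inj hac)
  have hs := funext_iff.1 (eq_of_heq hs)
  exact ⟨rfl, rfl, hs false, hs true⟩

theorem leafP_inj {u u' : Agent → ℝ} (h : leafP u = leafP u') : u = u' :=
  Sum.inl.inj (Sigma.mk.inj (PFunctor.M.mk_inj h)).1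

theorem leafP_ne_nodeP {u : Agent → ℝ} {a : Agent} {c : Choice} {s₁ s₂ : StratProf Agent} :
    leafP u ≠ nodeP a c s₁ s₂ := fun h =>
  Sum.inl_ne_inr (Sigma.mk.inj (PFunctor.M.mk_inj h)).1

theorem not_sameGame_leafP_nodeP {u : Agent → ℝ} {a : Agent} {c : Choice}
    {s₁ s₂ : StratProf Agent} : ¬ SameGame (leafP u) (nodeP a c s₁ s₂) := by
  rintro ⟨R, hR, hstep⟩
  rcases hstep _ _ hR with ⟨_, -, h⟩ | ⟨_, _, _, _, _, _, _, h, -⟩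
  · exact leafP_ne_nodeP h.symm
  · exact leafP_ne_nodeP h

theorem eq_leafP_of_sameGame {t : StratProf Agent} {u : Agent → ℝ}
    (h : SameGame t (leafP u)) : t = leafP u := by
  obtain ⟨R, hR, hstep⟩ := h
  rcases hstep _ _ hR with ⟨_, rfl, h⟩ | ⟨_, _, _, _, _, _, _, -, h, -⟩
  · rw [leafP_inj h]
  · exact absurd h leafP_ne_nodeP

theorem sameGame_nodeP_nodeP {a a' : Agent} {c c' : Choice} {s₁ s₂ s₁' s₂' : StratProf Agent}
    (h : SameGame (nodeP a c s₁ s₂) (nodeP a' c' s₁' s₂')) :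
    a = a' ∧ SameGame s₁ s₁' ∧ SameGame s₂ s₂' := by
  obtain ⟨R, hR, hstep⟩ := h
  rcases hstep _ _ hR with ⟨_, h, -⟩ | ⟨_, _, _, _, _, _, _, h, h', h₁, h₂⟩
  · exact absurd h.symm leafP_ne_nodeP
  · obtain ⟨rfl, -, rfl, rfl⟩ := nodeP_inj h
    obtain ⟨rfl, -, rfl, rfl⟩ := nodeP_inj h'
    exact ⟨rfl, ⟨R, h₁, hstep⟩, ⟨R, h₂, hstep⟩⟩

theorem sameGame_nodeP_leafP {a a' : Agent} {c c' : Choice} {u : Agent → ℝ}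
    {s₁ s₂ s : StratProf Agent} (h : SameGame (nodeP a c s₁ s₂) (nodeP a' c' (leafP u) s)) :
    a = a' ∧ s₁ = leafP u ∧ SameGame s₂ s :=
  let ⟨ha, h₁, h₂⟩ := sameGame_nodeP_nodeP h
  ⟨ha, eq_leafP_of_sameGame h₁, h₂⟩

theorem Always.self {P : StratProf Agent → Prop} {s : StratProf Agent} (h : Always P s) : P s :=
  let ⟨_, hR, hstep⟩ := h
  (hstep _ hR).1

theorem Always.of_nodeP {P : StratProf Agent → Prop} {a : Agent} {c : Choice}
    {s₁ s₂ : StratProf Agent} (h : Always P (nodeP a c s₁ s₂)) : Always P s₁ ∧ Always P s₂ :=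
  let ⟨R, hR, hstep⟩ := h
  let ⟨h₁, h₂⟩ := (hstep _ hR).2 a c s₁ s₂ rfl
  ⟨⟨R, h₁, hstep⟩, ⟨R, h₂, hstep⟩⟩

theorem Conv.of_nodeP {a : Agent} {c : Choice} {s₁ s₂ : StratProf Agent}
    (h : Conv (nodeP a c s₁ s₂)) : Conv (cchild c s₁ s₂) := by
  generalize ht : nodeP a c s₁ s₂ = t at h
  cases h with
  | leaf => exact absurd ht.symm leafP_ne_nodeP
  | node1 _ _ _ h => obtain ⟨-, rfl, rfl, -⟩ := nodeP_inj ht; exact h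
  | node2 _ _ _ h => obtain ⟨-, rfl, -, rfl⟩ := nodeP_inj ht; exact h

theorem UtilR.eq_of_leafP {u v : Agent → ℝ} (h : UtilR (leafP v) u) : u = v := by
  generalize ht : leafP v = t at h
  cases h with
  | leaf => exact (leafP_inj ht).symm
  | node1 => exact absurd ht leafP_ne_nodeP
  | node2 => exact absurd ht leafP_ne_nodeP

theorem UtilR.of_nodeP {a : Agent} {c : Choice} {s₁ s₂ : StratProf Agent} {u : Agent → ℝ}
    (h : UtilR (nodeP a c s₁ s₂) u) : UtilR (cchild c s₁ s₂) u := by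
  generalize ht : nodeP a c s₁ s₂ = t at h
  cases h with
  | leaf => exact absurd ht.symm leafP_ne_nodeP
  | node1 _ _ _ _ h => obtain ⟨-, rfl, rfl, -⟩ := nodeP_inj ht; exact h
  | node2 _ _ _ _ h => obtain ⟨-, rfl, -, rfl⟩ := nodeP_inj ht; exact h

theorem UtilR.unique {s : StratProf Agent} {u u' : Agent → ℝ} (h : UtilR s u) (h' : UtilR s u') :
    u = u' := by
  induction h with
  | leaf => exact h'.eq_of_leafP.symm
  | node1 _ _ _ _ _ ih => exact ih h'.of_nodeP
  | node2 _ _ _ _ _ ih => exact ih h'.of_nodeP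

theorem util_eq_of_utilR {s : StratProf Agent} {u : Agent → ℝ} (h : UtilR s u) : util s = u := by
  rw [util, dif_pos ⟨u, h⟩]
  exact (Exists.choose_spec (⟨u, h⟩ : ∃ u, UtilR s u)).unique h

theorem PE.utilR_le_of_two {a : Agent} {s₁ s₂ : StratProf Agent} {u₁ u₂ : Agent → ℝ}
    (h : PE (nodeP a Choice.two s₁ s₂)) (h₁ : UtilR s₁ u₁) (h₂ : UtilR s₂ u₂) : u₁ a ≤ u₂ a := by
  simpa only [util_eq_of_utilR h₁, util_eq_of_utilR h₂] using h.2.2 a s₁ s₂ rfl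

theorem ratInf_nodeP {a : Agent} {c : Choice} {s₁ s₂ : StratProf Agent}
    (h : RatInf (nodeP a c s₁ s₂)) :
    ∃ s₁' s₂', SameGame (nodeP a c s₁' s₂') (nodeP a c s₁ s₂) ∧ SPE (nodeP a c s₁' s₂') := by
  obtain ⟨R, hR, hstep⟩ := h
  rcases hstep _ hR with ⟨_, h⟩ | ⟨_, _, _, _, s₁', s₂', h, hg, hspe, -⟩
  · exact absurd h.symm leafP_ne_nodeP
  · obtain ⟨rfl, rfl, rfl, rfl⟩ := nodeP_inj h
    exact ⟨s₁', s₂', hg, hspe⟩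

end Profiles

theorem corec_pedStep_lS (u : Ag → ℝ) : PFunctor.M.corec pedStep (PedSt.lS u) = leafP u := by
  rw [PFunctor.M.corec_def]
  exact congrArg PFunctor.M.mk (Sigma.ext rfl (heq_of_eq (funext fun e => e.elim)))

theorem pped_eq (n : ℕ) : pped n = nodeP Ag.A Choice.one (leafP (uAp n)) (piped n) := by
  rw [pped, PFunctor.M.corec_def, ← corec_pedStep_lS]
  refine congrArg PFunctor.M.mk (Sigma.ext rfl (heq_of_eq (funext fun b => ?_)))
  cases b <;> rfl

theorem piped_eq (n : ℕ) : piped n = nodeP Ag.B Choice.one (leafP (uBp n)) (pped (n + 1)) := by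
  rw [piped, PFunctor.M.corec_def, ← corec_pedStep_lS]
  refine congrArg PFunctor.M.mk (Sigma.ext rfl (heq_of_eq (funext fun b => ?_)))
  cases b <;> rfl

theorem uBp_A_lt_uAp_A (n : ℕ) : uBp n Ag.A < uAp n Ag.A :=
  pow_lt_pow_right₀ one_lt_two (by omega)

theorem uAp_succ_B_lt_uBp_B (n : ℕ) : uAp (n + 1) Ag.B < uBp n Ag.B :=
  pow_lt_pow_right₀ one_lt_two (by omega)

theorem utilR_of_sameGame_ped {t : StratProf Ag} (hspe : SPE t) (n : ℕ) :
    (SameGame t (pped n) → UtilR t (uAp n)) ∧ (SameGame t (piped n) → UtilR t (uBp n)) := by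
  obtain hconv : Conv t := hspe.self.1.self
  induction hconv generalizing n with
  | leaf =>
    exact ⟨fun hg => (not_sameGame_leafP_nodeP (pped_eq n ▸ hg)).elim,
      fun hg => (not_sameGame_leafP_nodeP (piped_eq n ▸ hg)).elim⟩
  | node1 =>
    refine ⟨fun hg => ?_, fun hg => ?_⟩
    · obtain ⟨-, rfl, -⟩ := sameGame_nodeP_leafP (pped_eq n ▸ hg)
      exact .node1 _ _ _ _ (.leaf _)
    · obtain ⟨-, rfl, -⟩ := sameGame_nodeP_leafP (piped_eq n ▸ hg)
      exact .node1 _ _ _ _ (.leaf _)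
  | node2 _ _ _ _ ih =>
    have hpe : PE _ := hspe.self
    have ih := ih hspe.of_nodeP.2
    refine ⟨fun hg => ?_, fun hg => ?_⟩
    · obtain ⟨rfl, rfl, h₂⟩ := sameGame_nodeP_leafP (pped_eq n ▸ hg)
      exact absurd (hpe.utilR_le_of_two (.leaf _) ((ih n).2 h₂)) (not_le.2 (uBp_A_lt_uAp_A n))
    · obtain ⟨rfl, rfl, h₂⟩ := sameGame_nodeP_leafP (piped_eq n ▸ hg)
      exact absurd (hpe.utilR_le_of_two (.leaf _) ((ih (n + 1)).1 h₂))
        (not_le.2 (uAp_succ_B_lt_uBp_B n))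

/-- The divergent ∞pede strategy profile `d_0` is not rational:
`¬ Rat_∞(d_0)`. -/
theorem not_ratInf_dped_zero : ¬ RatInf (dped 0) := by
  intro h
  obtain ⟨s₁, s₂, hg, hspe⟩ := ratInf_nodeP h
  obtain ⟨-, rfl, h₂⟩ := sameGame_nodeP_leafP hg
  have hpe : PE _ := hspe.self
  have hu₂ : UtilR s₂ (uBp 0) := (utilR_of_sameGame_ped hspe.of_nodeP.2 0).2 h₂
  exact absurd (hpe.utilR_le_of_two (.leaf _) hu₂) (not_le.2 (uBp_A_lt_uAp_A 0))
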